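/- arXiv:1209.3048 — 3 statements merged into one kernel-verified Lean document; each statement's English description precedes it below -/
import Mathlib

section
/- Let A, B, C, D > 0 and suppose the quadratic C - D·y + (A+B)·y² = 0 has two distinct roots y₁ < y₂. Then for positive solutions (x₁, x₂) of x₁' = -C - A·(x₁/x₂)², x₂' = -D + B·(x₁/x₂), the ratio y = x₁/x₂ is strictly increasing on any time interval where y₁ < y(t) < y₂, and strictly decreasing on any time interval where y(t) < y₁ or y(t) > y₂. -/
/-! The ratio `y = x₁ / x₂` satisfies `y' = -(C - D y + (A + B) y²) / x₂`, and since the quadratic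
has positive leading coefficient and roots `y₁ < y₂`, it equals `(A + B) (y - y₁) (y - y₂)`: it is
negative strictly between the roots and positive outside them. -/

lemma quadratic_eq_mul_sub_mul_sub {a c d y₁ y₂ : ℝ} (hne : y₁ ≠ y₂)
    (h₁ : c - d * y₁ + a * y₁ ^ 2 = 0) (h₂ : c - d * y₂ + a * y₂ ^ 2 = 0) (y : ℝ) :
    c - d * y + a * y ^ 2 = a * (y - y₁) * (y - y₂) := by
  have hsum : d = a * (y₁ + y₂) :=
    mul_left_cancel₀ (sub_ne_zero.mpr hne.symm) (by linear_combination h₁ - h₂)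
  have hprod : c = a * (y₁ * y₂) := by linear_combination h₁ + y₁ * hsum
  rw [hsum, hprod]
  ring

lemma mul_sub_mul_sub_neg_of_mem_Ioo {a y₁ y₂ y : ℝ} (ha : 0 < a) (hy : y ∈ Set.Ioo y₁ y₂) :
    a * (y - y₁) * (y - y₂) < 0 :=
  mul_neg_of_pos_of_neg (mul_pos ha (sub_pos.mpr hy.1)) (sub_neg.mpr hy.2)

lemma mul_sub_mul_sub_pos_of_lt_or_gt {a y₁ y₂ y : ℝ} (ha : 0 < a) (h12 : y₁ < y₂)
    (hy : y < y₁ ∨ y₂ < y) : 0 < a * (y - y₁) * (y - y₂) := by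
  rcases hy with hy | hy
  · exact mul_pos_of_neg_of_neg (mul_neg_of_pos_of_neg ha (sub_neg.mpr hy))
      (sub_neg.mpr (hy.trans h12))
  · exact mul_pos (mul_pos ha (sub_pos.mpr (h12.trans hy))) (sub_pos.mpr hy)

lemma hasDerivAt_div_of_ode {A B C D t : ℝ} {x₁ x₂ : ℝ → ℝ} (hx₂ : x₂ t ≠ 0)
    (h₁ : HasDerivAt x₁ (-C - A * (x₁ t / x₂ t) ^ 2) t)
    (h₂ : HasDerivAt x₂ (-D + B * (x₁ t / x₂ t)) t) :
    HasDerivAt (fun t => x₁ t / x₂ t)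
      (-(C - D * (x₁ t / x₂ t) + (A + B) * (x₁ t / x₂ t) ^ 2) / x₂ t) t := by
  refine (h₁.div h₂ hx₂).congr_deriv ?_
  field_simp
  ring

section OrdConnected

variable {J : Set ℝ} {f f' : ℝ → ℝ}

lemma strictMonoOn_of_hasDerivAt_pos (hJ : J.OrdConnected)
    (hf : ∀ t ∈ J, HasDerivAt f (f' t) t) (hf' : ∀ t ∈ J, 0 < f' t) : StrictMonoOn f J :=
  strictMonoOn_of_hasDerivWithinAt_pos hJ.convex
    (fun t ht => (hf t ht).continuousAt.continuousWithinAt)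
    (fun t ht => (hf t (interior_subset ht)).hasDerivWithinAt)
    (fun t ht => hf' t (interior_subset ht))

lemma strictAntiOn_of_hasDerivAt_neg (hJ : J.OrdConnected)
    (hf : ∀ t ∈ J, HasDerivAt f (f' t) t) (hf' : ∀ t ∈ J, f' t < 0) : StrictAntiOn f J :=
  strictAntiOn_of_hasDerivWithinAt_neg hJ.convex
    (fun t ht => (hf t ht).continuousAt.continuousWithinAt)
    (fun t ht => (hf t (interior_subset ht)).hasDerivWithinAt)
    (fun t ht => hf' t (interior_subset ht))

end OrdConnected

theorem stmt4_general (A B C D y₁ y₂ : ℝ) (hA : 0 < A) (hB : 0 < B)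
    (hroots : ∀ y : ℝ, C - D * y + (A + B) * y ^ 2 = 0 ↔ y = y₁ ∨ y = y₂)
    (h12 : y₁ < y₂)
    (I : Set ℝ) (x₁ x₂ : ℝ → ℝ)
    (hpos₂ : ∀ t ∈ I, 0 < x₂ t)
    (hode₁ : ∀ t ∈ I, HasDerivAt x₁ (-C - A * (x₁ t / x₂ t) ^ 2) t)
    (hode₂ : ∀ t ∈ I, HasDerivAt x₂ (-D + B * (x₁ t / x₂ t)) t) :
    (∀ J : Set ℝ, J ⊆ I → J.OrdConnected →
      (∀ t ∈ J, y₁ < x₁ t / x₂ t ∧ x₁ t / x₂ t < y₂) →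
      StrictMonoOn (fun t => x₁ t / x₂ t) J) ∧
    (∀ J : Set ℝ, J ⊆ I → J.OrdConnected →
      (∀ t ∈ J, x₁ t / x₂ t < y₁ ∨ y₂ < x₁ t / x₂ t) →
      StrictAntiOn (fun t => x₁ t / x₂ t) J) := by
  have hAB : 0 < A + B := add_pos hA hB
  have hfac := quadratic_eq_mul_sub_mul_sub h12.ne ((hroots y₁).mpr (Or.inl rfl))
    ((hroots y₂).mpr (Or.inr rfl))
  have hder : ∀ t ∈ I, HasDerivAt (fun t => x₁ t / x₂ t)
      (-((A + B) * (x₁ t / x₂ t - y₁) * (x₁ t / x₂ t - y₂)) / x₂ t) t := fun t ht => by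
    simpa only [hfac] using hasDerivAt_div_of_ode (hpos₂ t ht).ne' (hode₁ t ht) (hode₂ t ht)
  refine ⟨fun J hJI hJ hbetween => ?_, fun J hJI hJ houtside => ?_⟩
  · refine strictMonoOn_of_hasDerivAt_pos hJ (fun t ht => hder t (hJI ht)) fun t ht => ?_
    exact div_pos (neg_pos.mpr (mul_sub_mul_sub_neg_of_mem_Ioo hAB (hbetween t ht)))
      (hpos₂ t (hJI ht))
  · refine strictAntiOn_of_hasDerivAt_neg hJ (fun t ht => hder t (hJI ht)) fun t ht => ?_
    exact div_neg_of_neg_of_pos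
      (neg_neg_of_pos (mul_sub_mul_sub_pos_of_lt_or_gt hAB h12 (houtside t ht)))
      (hpos₂ t (hJI ht))

theorem stmt4 (A B C D y₁ y₂ : ℝ) (hA : 0 < A) (hB : 0 < B) (hC : 0 < C) (hD : 0 < D)
    (hroots : ∀ y : ℝ, C - D * y + (A + B) * y ^ 2 = 0 ↔ y = y₁ ∨ y = y₂)
    (h12 : y₁ < y₂)
    (I : Set ℝ) (x₁ x₂ : ℝ → ℝ)
    (hpos₁ : ∀ t ∈ I, 0 < x₁ t) (hpos₂ : ∀ t ∈ I, 0 < x₂ t)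
    (hode₁ : ∀ t ∈ I, HasDerivAt x₁ (-C - A * (x₁ t / x₂ t) ^ 2) t)
    (hode₂ : ∀ t ∈ I, HasDerivAt x₂ (-D + B * (x₁ t / x₂ t)) t) :
    (∀ J : Set ℝ, J ⊆ I → J.OrdConnected →
      (∀ t ∈ J, y₁ < x₁ t / x₂ t ∧ x₁ t / x₂ t < y₂) →
      StrictMonoOn (fun t => x₁ t / x₂ t) J) ∧
    (∀ J : Set ℝ, J ⊆ I → J.OrdConnected →
      (∀ t ∈ J, x₁ t / x₂ t < y₁ ∨ y₂ < x₁ t / x₂ t) →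
      StrictAntiOn (fun t => x₁ t / x₂ t) J) :=
  stmt4_general A B C D y₁ y₂ hA hB hroots h12 I x₁ x₂ hpos₂ hode₁ hode₂
end

section
/- Let A, B, D > 0, ȳ = D/(A+B), and let (x₁, x₂) be a positive solution of x₁' = -A·(x₁/x₂)², x₂' = -D + B·(x₁/x₂) with x₁(0)/x₂(0) < ȳ. Then x₂'(t) < -D + B·ȳ < 0 for all t in the interval of existence, hence x₂(t) < x₂(0) - (D - B·ȳ)·t and the maximal existence time is finite. -/
/-!
With `ȳ = D / (A + B)`, the gap `u = ȳ x₂ - x₁` satisfies the scalar linear equation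
`u' = -((A y + D) / x₂) u`, where `y = x₁ / x₂`. By uniqueness for linear ODEs a solution that
vanishes somewhere vanishes identically, so `u(0) > 0` forces `u > 0`, i.e. `y < ȳ`, for all
time. Hence `x₂' < -D + B ȳ = -A D / (A + B) < 0`, so `x₂` decreases at least linearly and, being
positive, the solution cannot exist beyond `x₂(0) / (D - B ȳ)`.
-/

open Set

theorem eqOn_zero_of_hasDerivAt_mul_of_eq_zero {u c : ℝ → ℝ} {a b : ℝ}
    (hc : ContinuousOn c (Icc a b)) (hu : ∀ t ∈ Icc a b, HasDerivAt u (c t * u t) t)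
    (hb : u b = 0) : EqOn u 0 (Icc a b) := by
  obtain ⟨M, hM⟩ := isCompact_Icc.exists_bound_of_continuousOn hc
  have hlip : ∀ t ∈ Ioc a b, LipschitzOnWith M.toNNReal (fun x ↦ c t * x) univ := fun t ht ↦
    ((lipschitzWith_smul (c t)).weaken (by
      rw [← NNReal.coe_le_coe, coe_nnnorm]
      exact (hM t (Ioc_subset_Icc_self ht)).trans M.le_coe_toNNReal)).lipschitzOnWith
  have hcont : ContinuousOn u (Icc a b) := fun t ht ↦ (hu t ht).continuousAt.continuousWithinAt
  refine ODE_solution_unique_of_mem_Icc_left hlip hcont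
    (fun t ht ↦ (hu t (Ioc_subset_Icc_self ht)).hasDerivWithinAt) (fun _ _ ↦ mem_univ _)
    continuousOn_const (fun t _ ↦ by
      rw [Pi.zero_apply, mul_zero]; exact hasDerivWithinAt_const t _ 0)
    (fun _ _ ↦ mem_univ _) hb

theorem pos_of_hasDerivAt_mul_of_pos {u c : ℝ → ℝ} {a b : ℝ}
    (hc : ContinuousOn c (Icc a b)) (hu : ∀ t ∈ Icc a b, HasDerivAt u (c t * u t) t)
    (ha : 0 < u a) : ∀ t ∈ Icc a b, 0 < u t := by
  intro t ht
  by_contra! hut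
  have hsub : Icc a t ⊆ Icc a b := Icc_subset_Icc_right ht.2
  obtain ⟨s, hs, hus⟩ := intermediate_value_Icc' ht.1
    (fun r hr ↦ (hu r (hsub hr)).continuousAt.continuousWithinAt) ⟨hut, ha.le⟩
  have hsub' : Icc a s ⊆ Icc a b := (Icc_subset_Icc_right hs.2).trans hsub
  exact ha.ne' <| eqOn_zero_of_hasDerivAt_mul_of_eq_zero (hc.mono hsub')
    (fun r hr ↦ hu r (hsub' hr)) hus (left_mem_Icc.2 hs.1)

theorem ratio_lt_equilibrium {A B D T : ℝ} {x₁ x₂ : ℝ → ℝ} (hAB : A + B ≠ 0)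
    (hpos₂ : ∀ t ∈ Ico (0 : ℝ) T, 0 < x₂ t)
    (hode₁ : ∀ t ∈ Ico (0 : ℝ) T, HasDerivAt x₁ (-A * (x₁ t / x₂ t) ^ 2) t)
    (hode₂ : ∀ t ∈ Ico (0 : ℝ) T, HasDerivAt x₂ (-D + B * (x₁ t / x₂ t)) t)
    (hinit : x₁ 0 / x₂ 0 < D / (A + B)) :
    ∀ t ∈ Ico (0 : ℝ) T, x₁ t / x₂ t < D / (A + B) := by
  set Y := D / (A + B)
  set c : ℝ → ℝ := fun t ↦ -(A * (x₁ t / x₂ t) + D) / x₂ t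
  have hgap : ∀ t ∈ Ico (0 : ℝ) T, HasDerivAt (fun s ↦ Y * x₂ s - x₁ s)
      (c t * (Y * x₂ t - x₁ t)) t := by
    intro t ht
    refine (((hode₂ t ht).const_mul Y).sub (hode₁ t ht)).congr_deriv ?_
    have hx₂ := (hpos₂ t ht).ne'
    simp only [c, Y]
    field_simp
    ring
  have hc : ∀ t ∈ Ico (0 : ℝ) T, ContinuousAt c t := fun t ht ↦ by
    have h₁ := (hode₁ t ht).continuousAt
    have h₂ := (hode₂ t ht).continuousAt
    have hx₂ := (hpos₂ t ht).ne'
    exact ((h₁.div h₂ hx₂).const_mul A |>.add continuousAt_const).neg.div h₂ hx₂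
  intro t ht
  have hsub : Icc 0 t ⊆ Ico 0 T := Icc_subset_Ico_right ht.2
  have h0 : (0 : ℝ) ∈ Ico 0 T := ⟨le_rfl, ht.1.trans_lt ht.2⟩
  have hpos := pos_of_hasDerivAt_mul_of_pos (fun s hs ↦ (hc s (hsub hs)).continuousWithinAt)
    (fun s hs ↦ hgap s (hsub hs)) (by
      have := (div_lt_iff₀ (hpos₂ 0 h0)).1 hinit
      linarith) t (right_mem_Icc.2 ht.1)
  rw [div_lt_iff₀ (hpos₂ t ht)]
  linarith

theorem stmt8_general (A B D T : ℝ) (hA : 0 < A) (hB : 0 < B) (hD : 0 < D) (hT : 0 < T)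
    (x₁ x₂ : ℝ → ℝ)
    (hpos₂ : ∀ t ∈ Set.Ico (0:ℝ) T, 0 < x₂ t)
    (hode₁ : ∀ t ∈ Set.Ico (0:ℝ) T,
      HasDerivAt x₁ (-A * (x₁ t / x₂ t) ^ 2) t)
    (hode₂ : ∀ t ∈ Set.Ico (0:ℝ) T,
      HasDerivAt x₂ (-D + B * (x₁ t / x₂ t)) t)
    (hinit : x₁ 0 / x₂ 0 < D / (A + B)) :
    (∀ t ∈ Set.Ico (0:ℝ) T,
      -D + B * (x₁ t / x₂ t) < -D + B * (D / (A + B)) ∧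
      -D + B * (D / (A + B)) < 0) ∧
    (∀ t ∈ Set.Ioo (0:ℝ) T, x₂ t < x₂ 0 - (D - B * (D / (A + B))) * t) ∧
    T ≤ x₂ 0 / (D - B * (D / (A + B))) := by
  have hAB : 0 < A + B := by positivity
  set K := D - B * (D / (A + B)) with hK_def
  have hK : 0 < K := by
    have : K = A * D / (A + B) := by rw [hK_def]; field_simp; ring
    rw [this]; positivity
  have hslope : ∀ t ∈ Ico (0 : ℝ) T, -D + B * (x₁ t / x₂ t) < -K := fun t ht ↦ by
    have := mul_lt_mul_of_pos_left (ratio_lt_equilibrium hAB.ne' hpos₂ hode₁ hode₂ hinit t ht) hB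
    linarith
  have hdecay : ∀ t ∈ Ioo (0 : ℝ) T, x₂ t < x₂ 0 - K * t := fun t ht ↦ by
    have := (convex_Ico 0 T).image_sub_lt_mul_sub_of_deriv_lt
      (fun s hs ↦ (hode₂ s hs).continuousAt.continuousWithinAt)
      (fun s hs ↦ (hode₂ s (interior_subset hs)).differentiableAt.differentiableWithinAt)
      (fun s hs ↦ (hode₂ s (interior_subset hs)).deriv ▸ hslope s (interior_subset hs))
      0 ⟨le_rfl, hT⟩ t (Ioo_subset_Ico_self ht) ht.1
    linarith
  refine ⟨fun t ht ↦ ⟨by linarith [hslope t ht], by linarith⟩, hdecay, ?_⟩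
  by_contra! hTK
  have hx₂0 := hpos₂ 0 ⟨le_rfl, hT⟩
  have := hdecay _ ⟨div_pos hx₂0 hK, hTK⟩
  rw [mul_div_cancel₀ _ hK.ne', sub_self] at this
  exact (hpos₂ _ ⟨(div_pos hx₂0 hK).le, hTK⟩).not_gt this

theorem stmt8 (A B D T : ℝ) (hA : 0 < A) (hB : 0 < B) (hD : 0 < D) (hT : 0 < T)
    (x₁ x₂ : ℝ → ℝ)
    (hpos₁ : ∀ t ∈ Set.Ico (0:ℝ) T, 0 < x₁ t)
    (hpos₂ : ∀ t ∈ Set.Ico (0:ℝ) T, 0 < x₂ t)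
    (hode₁ : ∀ t ∈ Set.Ico (0:ℝ) T,
      HasDerivAt x₁ (-A * (x₁ t / x₂ t) ^ 2) t)
    (hode₂ : ∀ t ∈ Set.Ico (0:ℝ) T,
      HasDerivAt x₂ (-D + B * (x₁ t / x₂ t)) t)
    (hinit : x₁ 0 / x₂ 0 < D / (A + B)) :
    (∀ t ∈ Set.Ico (0:ℝ) T,
      -D + B * (x₁ t / x₂ t) < -D + B * (D / (A + B)) ∧
      -D + B * (D / (A + B)) < 0) ∧
    (∀ t ∈ Set.Ioo (0:ℝ) T, x₂ t < x₂ 0 - (D - B * (D / (A + B))) * t) ∧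
    T ≤ x₂ 0 / (D - B * (D / (A + B))) :=
  stmt8_general A B D T hA hB hD hT x₁ x₂ hpos₂ hode₁ hode₂ hinit
end

section
/- Let A₁, A₂, B₁, B₂, C₁, C₂ > 0. Then every real root of the cubic -(B₂ + C₁)·y³ + A₂·y² - A₁·y + (B₁ + C₂) = 0 is strictly positive, and the cubic has at least one real root. -/
/-!
A root `y ≤ 0` is impossible because every term of the cubic is then nonnegative and the
constant term is positive. For existence, the cubic is nonnegative at `0` and, since its leading
coefficient is negative, nonpositive at an explicit point `M`; the intermediate value theorem
gives a root in `[0, M]`.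
-/

lemma cubic_pos_of_nonpos {a b c d y : ℝ} (ha : 0 ≤ a) (hb : 0 ≤ b) (hc : 0 ≤ c) (hd : 0 < d)
    (hy : y ≤ 0) : 0 < -a * y ^ 3 + b * y ^ 2 - c * y + d := by
  have hy' : 0 ≤ -y := neg_nonneg.mpr hy
  have h3 : 0 ≤ -a * y ^ 3 := by
    have := mul_nonneg ha (pow_nonneg hy' 3)
    linarith [show (-y) ^ 3 = -y ^ 3 by ring]
  nlinarith [mul_nonneg hb (sq_nonneg y), mul_nonneg hc hy']

lemma cubic_nonpos_of_le_mul {a b c d M : ℝ} (hM : 1 ≤ M) (haM : |b| + |c| + |d| ≤ a * M) :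
    -a * M ^ 3 + b * M ^ 2 - c * M + d ≤ 0 := by
  have hM2 : M ≤ M ^ 2 := by nlinarith
  calc -a * M ^ 3 + b * M ^ 2 - c * M + d
      ≤ -(a * M) * M ^ 2 + |b| * M ^ 2 + |c| * M ^ 2 + |d| * M ^ 2 := by
        nlinarith [le_abs_self b, neg_abs_le c, le_abs_self d, abs_nonneg c, abs_nonneg d]
    _ = -(a * M - (|b| + |c| + |d|)) * M ^ 2 := by ring
    _ ≤ 0 := by nlinarith [sq_nonneg M]

lemma exists_root_cubic_of_neg_leading {a b c d : ℝ} (ha : 0 < a) (hd : 0 ≤ d) :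
    ∃ y, -a * y ^ 3 + b * y ^ 2 - c * y + d = 0 := by
  set M := (|b| + |c| + |d|) / a + 1 with hM_def
  have hM : 1 ≤ M := le_add_of_nonneg_left (by positivity)
  have haM : |b| + |c| + |d| ≤ a * M := by
    rw [hM_def, mul_add, mul_div_cancel₀ _ ha.ne']
    linarith
  obtain ⟨y, -, hy⟩ := intermediate_value_Icc' (zero_le_one.trans hM)
    (f := fun y => -a * y ^ 3 + b * y ^ 2 - c * y + d) (by fun_prop)
    ⟨cubic_nonpos_of_le_mul hM haM, by simpa using hd⟩
  exact ⟨y, hy⟩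

theorem stmt13 (A₁ A₂ B₁ B₂ C₁ C₂ : ℝ)
    (hA₁ : 0 < A₁) (hA₂ : 0 < A₂) (hB₁ : 0 < B₁) (hB₂ : 0 < B₂)
    (hC₁ : 0 < C₁) (hC₂ : 0 < C₂) :
    (∀ y : ℝ, -(B₂ + C₁) * y ^ 3 + A₂ * y ^ 2 - A₁ * y + (B₁ + C₂) = 0 → 0 < y) ∧
    (∃ y : ℝ, -(B₂ + C₁) * y ^ 3 + A₂ * y ^ 2 - A₁ * y + (B₁ + C₂) = 0) := by
  refine ⟨fun y hy => ?_, exists_root_cubic_of_neg_leading (by positivity) (by positivity)⟩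
  by_contra! hy_nonpos
  exact (cubic_pos_of_nonpos (by positivity) hA₂.le hA₁.le (by positivity) hy_nonpos).ne' hy
end
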